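/- Fix λ ⊢ n with height h, m ∈ ℕ, and tableaux τ, σ ∈ T_{λ,m}. For a 'count function' κ : ⋃_{t=1}^h ([m]^t × [m]^t) → ℕ satisfying, for each i ≤ h and s ∈ [m], ∑_{t=i}^h ∑_{v,w∈[m]^t, v_i=s} κ(v,w) = (number of entries equal to s in row i of τ) and ∑_{t=i}^h ∑_{v,w∈[m]^t, w_i=s} κ(v,w) = (number of entries equal to s in row i of σ), the number of pairs (τ', σ') with τ' ∼ τ, σ' ∼ σ whose column-pattern count function equals κ is ∏_{t=1}^h (λ_t − λ_{t+1})! / ∏_{v,w∈[m]^t} κ(v,w)! (with λ_{h+1} = 0). -/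

import Mathlib

open Finset

section Tableaux

variable (l : ℕ → ℕ) (t : ℕ) (m : ℕ)

/-- The Young shape of the partition `λ = (l 0 ≥ l 1 ≥ ⋯ ≥ l (t-1))` (written
0-based): the cells `(c, r)` with `r < t` and `c < l r` (`c` the column index,
`r` the row index). -/
def YoungShape : Finset (ℕ × ℕ) :=
  (range (l 0) ×ˢ range t).filter (fun p => p.1 < l p.2)

/-- The row stabilizer `R_λ`: permutations of the shape preserving each row. -/
def rowStab : Finset (Equiv.Perm {p // p ∈ YoungShape l t}) :=
  univ.filter (fun π => ∀ y, ((π y : ℕ × ℕ)).2 = ((y : ℕ × ℕ)).2)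

/-- The row-equivalence class `{τ' : τ' ∼ τ}` of a tableau
`τ : Y(λ) → [m]`, consisting of the tableaux `τ ∘ r` for `r ∈ R_λ`. -/
def rowClass (τ : {p // p ∈ YoungShape l t} → Fin m) :
    Finset ({p // p ∈ YoungShape l t} → Fin m) :=
  (rowStab l t).image (fun r => fun y => τ (r y))

/-- Extension of a tableau to all of `ℕ × ℕ` (with junk value outside the
shape), convenient for indexing. -/
def extTab (hm : 0 < m) (τ : {p // p ∈ YoungShape l t} → Fin m) : ℕ × ℕ → Fin m :=
  fun p => if h : p ∈ YoungShape l t then τ ⟨p, h⟩ else ⟨0, hm⟩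

/-- The height `λ*_c` of column `c` of the shape. -/
def colHeight (c : ℕ) : ℕ := ((range t).filter (fun r => c < l r)).card

/-- The count function of a pair of tableaux `(τ', σ')` agrees with `κ`:
for each column height `t'` (with `1 ≤ t' ≤ t`) and each pair of patterns
`v, w ∈ [m]^{t'}`, `κ t' v w` is the number of columns `c` of height `t'` such
that `τ'(i,c) = v i` and `σ'(i,c) = w i` for all `i < t'`. -/
def HasCountFun (hm : 0 < m)
    (κ : (t' : ℕ) → (Fin t' → Fin m) → (Fin t' → Fin m) → ℕ)
    (τ' σ' : {p // p ∈ YoungShape l t} → Fin m) : Prop :=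
  ∀ t' ∈ Icc 1 t, ∀ v w : Fin t' → Fin m,
    κ t' v w = ((range (l 0)).filter (fun c =>
      colHeight l t c = t' ∧ ∀ i : Fin t',
        extTab l t m hm τ' (c, (i : ℕ)) = v i ∧
        extTab l t m hm σ' (c, (i : ℕ)) = w i)).card

instance (hm : 0 < m) (κ : (t' : ℕ) → (Fin t' → Fin m) → (Fin t' → Fin m) → ℕ)
    (τ' σ' : {p // p ∈ YoungShape l t} → Fin m) :
    Decidable (HasCountFun l t m hm κ τ' σ') := by
  unfold HasCountFun; infer_instance

end Tableaux

/-!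
Reading a pair of tableaux column by column, and grouping the columns by height, identifies it
with a family of maps `g_r : {columns of height r + 1} → [m]^{r+1} × [m]^{r+1}`; the pair has
count function `κ` exactly when every `g_r` has fibres of sizes `κ (r + 1) v w`. By the
orbit–stabilizer theorem for the permutations of the columns, the number of such `g_r` is
`(λ_r - λ_{r+1})! / ∏ κ(v, w)!`, the fibre sizes summing to `λ_r - λ_{r+1}` by the marginal
hypotheses. The condition `τ' ∼ τ` is automatic: the count function of `(τ', σ')` determines
the row contents of `τ'`, which the marginal hypotheses force to be those of `τ`, and two
tableaux with the same row contents differ by a row permutation.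
-/

section FiberCounting

variable {α β : Type*} [Fintype α] [DecidableEq β]

abbrev HasFiberCards (κ : β → ℕ) (g : α → β) : Prop :=
  ∀ b, Fintype.card {x // g x = b} = κ b

theorem exists_perm_comp_eq_iff_card_fiber_eq (f g : α → β) :
    (∃ e : Equiv.Perm α, f = g ∘ e) ↔
      ∀ b, Fintype.card {x // f x = b} = Fintype.card {x // g x = b} := by
  constructor
  · rintro ⟨e, rfl⟩ b
    exact Fintype.card_congr (e.subtypeEquiv fun _ => Iff.rfl)
  · intro h
    exact ⟨Equiv.ofFiberEquiv fun b => Fintype.equivOfCardEq (h b),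
      funext fun x => (Equiv.ofFiberEquiv_map _ x).symm⟩

theorem exists_hasFiberCards [Fintype β] {κ : β → ℕ} (hκ : ∑ b, κ b = Fintype.card α) :
    ∃ g : α → β, HasFiberCards κ g := by
  obtain ⟨e⟩ : Nonempty (α ≃ Σ b, Fin (κ b)) := ⟨Fintype.equivOfCardEq (by simp [hκ])⟩
  refine ⟨fun x => (e x).1, fun b => ?_⟩
  rw [Fintype.card_congr ((e.subtypeEquiv fun _ => Iff.rfl).trans (Equiv.sigmaSubtype b)),
    Fintype.card_fin]

open MulAction in
theorem card_hasFiberCards_mul_prod_factorial [DecidableEq α] [Fintype β] {κ : β → ℕ}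
    (hκ : ∑ b, κ b = Fintype.card α) :
    Fintype.card {g : α → β // HasFiberCards κ g} * ∏ b, (κ b).factorial
      = (Fintype.card α).factorial := by
  obtain ⟨g₀, hg₀⟩ := exists_hasFiberCards hκ
  have horbit : {g : α → β // HasFiberCards κ g} ≃ orbit (Equiv.Perm α)ᵈᵐᵃ g₀ := by
    refine Equiv.subtypeEquivRight fun g => ?_
    rw [HasFiberCards, forall_congr' fun b => by rw [← hg₀ b],
      ← exists_perm_comp_eq_iff_card_fiber_eq, mem_orbit_iff]
    simp only [eq_comm (a := g)]
    exact DomMulAct.mk.exists_congr_left.trans (exists_congr fun e => by rfl)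
  have hstab : stabilizer (Equiv.Perm α)ᵈᵐᵃ g₀ ≃ {e : Equiv.Perm α // g₀ ∘ e = g₀} :=
    Equiv.subtypeEquiv DomMulAct.mk.symm fun _ => DomMulAct.mem_stabilizer_iff
  calc Fintype.card {g : α → β // HasFiberCards κ g} * ∏ b, (κ b).factorial
      = Nat.card (orbit (Equiv.Perm α)ᵈᵐᵃ g₀) * Nat.card (stabilizer (Equiv.Perm α)ᵈᵐᵃ g₀) := by
        rw [Nat.card_congr horbit.symm, Nat.card_congr hstab, Nat.card_eq_fintype_card,
          Nat.card_eq_fintype_card, DomMulAct.stabilizer_card]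
        simp only [hg₀]
    _ = Nat.card (Equiv.Perm α) := by
        rw [← Nat.card_prod, Nat.card_congr (orbitProdStabilizerEquivGroup _ g₀),
          Nat.card_congr DomMulAct.mk.symm]
    _ = (Fintype.card α).factorial := by rw [Nat.card_eq_fintype_card, Fintype.card_perm]

end FiberCounting

theorem Finset.card_subtype_filter {α : Type*} (s : Finset α) (Q : α → Prop) [DecidablePred Q] :
    Fintype.card {c : s // Q c} = #(s.filter Q) := by
  rw [Fintype.card_subtype, univ_eq_attach, filter_attach, card_map, card_attach]

theorem Finset.lt_card_iff_mem_of_le_mem {S : Finset ℕ} (hS : ∀ i ∈ S, ∀ j ≤ i, j ∈ S)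
    (i : ℕ) : i < #S ↔ i ∈ S := by
  constructor
  · intro hi
    by_contra hiS
    have := card_le_card fun j hj => mem_range.2 <| not_le.1 fun hij => hiS (hS j hj i hij)
    rw [card_range] at this
    omega
  · intro hi
    simpa using card_le_card fun j hj => hS i hi j (Nat.lt_succ_iff.1 (mem_range.1 hj))

theorem forall_mem_Icc_one_iff {t : ℕ} {P : ℕ → Prop} :
    (∀ k ∈ Icc 1 t, P k) ↔ ∀ r : Fin t, P (r + 1) := by
  refine ⟨fun h r => h _ (mem_Icc.2 ⟨by omega, r.2⟩), fun h k hk => ?_⟩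
  obtain ⟨hk1, hk2⟩ := mem_Icc.1 hk
  simpa [Nat.sub_add_cancel hk1] using h ⟨k - 1, by omega⟩

theorem prod_Icc_one_eq_prod_fin {M : Type*} [CommMonoid M] (t : ℕ) (f : ℕ → M) :
    ∏ k ∈ Icc 1 t, f k = ∏ r : Fin t, f (r + 1) := by
  rw [Fin.prod_univ_eq_prod_range (fun r => f (r + 1)), range_eq_Ico, prod_Ico_add',
    Ico_add_one_right_eq_Icc, zero_add]

theorem eq_sub_of_sum_Icc_eq {f l : ℕ → ℕ} {t : ℕ}
    (h : ∀ i < t, ∑ k ∈ Icc (i + 1) t, f k = l i) (hlt : l t = 0) {i : ℕ} (hi : i < t) :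
    f (i + 1) = l i - l (i + 1) := by
  have hi' := h i hi
  rw [← insert_Icc_add_one_left_eq_Icc (show i + 1 ≤ t by omega), sum_insert (by simp)] at hi'
  rcases (show i + 1 < t ∨ i + 1 = t by omega) with hlt' | rfl
  · have := h (i + 1) hlt'
    omega
  · rw [Icc_eq_empty (by omega), sum_empty] at hi'
    omega

abbrev Tableau (l : ℕ → ℕ) (t m : ℕ) : Type := {p // p ∈ YoungShape l t} → Fin m

section Shape

variable {l : ℕ → ℕ} {t m : ℕ}

theorem extTab_coe (hm : 0 < m) (τ : Tableau l t m) (y : {p // p ∈ YoungShape l t}) :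
    extTab l t m hm τ y = τ y :=
  dif_pos y.2

theorem mem_youngShape_iff (hanti : Antitone l) {c i : ℕ} :
    (c, i) ∈ YoungShape l t ↔ i < t ∧ c < l i := by
  simp only [YoungShape, mem_filter, mem_product, mem_range]
  exact ⟨fun h => ⟨h.1.2, h.2⟩, fun h => ⟨⟨h.2.trans_le (hanti i.zero_le), h.1⟩, h.2⟩⟩

theorem lt_colHeight_iff (hanti : Antitone l) (c i : ℕ) :
    i < colHeight l t c ↔ i < t ∧ c < l i := by
  rw [colHeight, Finset.lt_card_iff_mem_of_le_mem, mem_filter, mem_range]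
  simp only [mem_filter, mem_range]
  exact fun r hr j hj => ⟨hj.trans_lt hr.1, hr.2.trans_le (hanti hj)⟩

theorem colHeight_le (c : ℕ) : colHeight l t c ≤ t :=
  (card_filter_le _ _).trans (card_range t).le

/-- The columns of height `r + 1`. -/
def colBlock (l : ℕ → ℕ) (r : ℕ) : Finset ℕ := Ico (l (r + 1)) (l r)

theorem colHeight_eq_succ_iff (hanti : Antitone l) (hl0 : ∀ r, t ≤ r → l r = 0) {c r : ℕ}
    (hr : r < t) : colHeight l t c = r + 1 ↔ c ∈ colBlock l r := by
  have hlt := lt_colHeight_iff (t := t) hanti c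
  rw [colBlock, mem_Ico]
  constructor
  · intro h
    refine ⟨not_lt.1 fun hc => ?_, ((hlt r).1 (by omega)).2⟩
    by_cases hr1 : r + 1 < t
    · have := (hlt (r + 1)).2 ⟨hr1, hc⟩
      omega
    · rw [hl0 _ (not_lt.1 hr1)] at hc
      omega
  · rintro ⟨h1, h2⟩
    have := (hlt r).2 ⟨hr, h2⟩
    have := mt (hlt (r + 1)).1 (by omega)
    omega

theorem eq_of_mem_colBlock (hanti : Antitone l) {c r r' : ℕ} (h : c ∈ colBlock l r)
    (h' : c ∈ colBlock l r') : r = r' := by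
  simp only [colBlock, mem_Ico] at h h'
  by_contra hne
  rcases Nat.lt_or_gt_of_ne hne with hlt | hlt
  · have := hanti (show r + 1 ≤ r' by omega); omega
  · have := hanti (show r' + 1 ≤ r by omega); omega

theorem filter_colHeight_eq_succ (hanti : Antitone l) (hl0 : ∀ r, t ≤ r → l r = 0) {r : ℕ}
    (hr : r < t) (Q : ℕ → Prop) [DecidablePred Q] :
    {c ∈ range (l 0) | colHeight l t c = r + 1 ∧ Q c} = {c ∈ colBlock l r | Q c} := by
  ext c
  simp only [mem_filter, mem_range, colHeight_eq_succ_iff hanti hl0 hr]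
  have : c ∈ colBlock l r → c < l 0 := fun hc => (mem_Ico.1 hc).2.trans_le (hanti r.zero_le)
  tauto

theorem card_filter_range_eq_sum_colHeight (hanti : Antitone l) {i : ℕ} (hi : i < t)
    (Q : ℕ → Prop) [DecidablePred Q] :
    #{c ∈ range (l i) | Q c}
      = ∑ t' ∈ Icc (i + 1) t, #{c ∈ range (l 0) | colHeight l t c = t' ∧ Q c} := by
  have := sum_card_fiberwise_eq_card_filter {c ∈ range (l 0) | Q c} (Icc (i + 1) t)
    (colHeight l t)
  simp only [filter_filter, and_comm (a := Q _)] at this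
  rw [this]
  congr 1
  ext c
  simp only [mem_filter, mem_range, mem_Icc, Order.add_one_le_iff, lt_colHeight_iff hanti,
    colHeight_le, and_true]
  have : c < l i → c < l 0 := fun hc => hc.trans_le (hanti i.zero_le)
  tauto

end Shape

section RowContents

variable {l : ℕ → ℕ} {t m : ℕ}

def rowCount (hm : 0 < m) (τ : Tableau l t m) (i : ℕ) (s : Fin m) : ℕ :=
  #{c ∈ range (l i) | extTab l t m hm τ (c, i) = s}

theorem sum_rowCount (hm : 0 < m) (τ : Tableau l t m) (i : ℕ) :
    ∑ s, rowCount hm τ i s = l i := by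
  simpa [rowCount] using sum_card_fiberwise_eq_card_filter (range (l i)) univ
    (fun c => extTab l t m hm τ (c, i))

theorem card_fiber_eq_rowCount (hanti : Antitone l) (hl0 : ∀ r, t ≤ r → l r = 0) (hm : 0 < m)
    (τ : Tableau l t m) (s : Fin m) (i : ℕ) :
    Fintype.card {y // (τ y, y.1.2) = (s, i)} = rowCount hm τ i s := by
  rw [rowCount, Fintype.card_subtype]
  refine card_nbij (fun y => y.1.1) (fun y hy => ?_) (fun y hy z hz h => ?_) (fun c hc => ?_)
  · obtain ⟨rfl, rfl⟩ := Prod.mk.inj (mem_filter.1 hy).2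
    simp only [mem_coe, mem_filter, mem_range]
    exact ⟨((mem_youngShape_iff hanti).1 y.2).2, extTab_coe hm τ y⟩
  · have hy' := Prod.mk.inj (mem_filter.1 hy).2
    have hz' := Prod.mk.inj (mem_filter.1 hz).2
    exact Subtype.ext (Prod.ext h (hy'.2.trans hz'.2.symm))
  · simp only [coe_filter, mem_range] at hc
    have hi : i < t := not_le.1 fun hi => by simp [hl0 i hi] at hc
    have hmem := (mem_youngShape_iff hanti).2 ⟨hi, hc.1⟩
    refine ⟨⟨(c, i), hmem⟩, ?_, rfl⟩
    simp only [coe_filter, mem_univ, true_and, Set.mem_ofPred_eq, Prod.mk.injEq, and_true]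
    rw [← hc.2, ← extTab_coe hm τ ⟨(c, i), hmem⟩]

theorem mem_rowClass_of_rowCount_eq (hanti : Antitone l) (hl0 : ∀ r, t ≤ r → l r = 0)
    (hm : 0 < m) {τ τ' : Tableau l t m}
    (h : ∀ i < t, ∀ s, rowCount hm τ' i s = rowCount hm τ i s) : τ' ∈ rowClass l t m τ := by
  -- recording the row next to the entry makes the permutation matching the fibres preserve rows
  obtain ⟨e, he⟩ := (exists_perm_comp_eq_iff_card_fiber_eq (fun y => (τ' y, y.1.2))
    (fun y => (τ y, y.1.2))).2 fun ⟨s, i⟩ => by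
      rw [card_fiber_eq_rowCount hanti hl0 hm, card_fiber_eq_rowCount hanti hl0 hm]
      by_cases hi : i < t
      · exact h i hi s
      · simp [rowCount, hl0 i (not_lt.1 hi)]
  refine mem_image.2 ⟨e, mem_filter.2 ⟨mem_univ _, fun y => ?_⟩, funext fun y => ?_⟩
  · exact (congrArg Prod.snd (congrFun he y)).symm
  · exact (congrArg Prod.fst (congrFun he y)).symm

end RowContents

section Columns

variable {l : ℕ → ℕ} {t m : ℕ}

abbrev PatternPair (m k : ℕ) : Type := (Fin k → Fin m) × (Fin k → Fin m)

def colPattern (hm : 0 < m) (τ' σ' : Tableau l t m) (k c : ℕ) : PatternPair m k :=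
  (fun i => extTab l t m hm τ' (c, i), fun i => extTab l t m hm σ' (c, i))

/-- `⟨r, c, i⟩` is the cell in row `i` of the column `c`, of height `r + 1`. -/
def shapeCell (hanti : Antitone l) (x : Σ r : Fin t, colBlock l r × Fin (r + 1)) :
    {p // p ∈ YoungShape l t} :=
  ⟨(x.2.1, x.2.2), (mem_youngShape_iff hanti).2
    ⟨by omega, (mem_Ico.1 x.2.1.2).2.trans_le (hanti (Nat.lt_succ_iff.1 x.2.2.2))⟩⟩

theorem shapeCell_bijective (hanti : Antitone l) (hl0 : ∀ r, t ≤ r → l r = 0) :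
    Function.Bijective (shapeCell (t := t) hanti) := by
  constructor
  · rintro ⟨r, c, i⟩ ⟨r', c', i'⟩ h
    simp only [shapeCell, Subtype.mk.injEq, Prod.mk.injEq] at h
    obtain rfl : r = r' := Fin.ext (eq_of_mem_colBlock hanti c.2 (h.1 ▸ c'.2))
    obtain rfl : c = c' := Subtype.ext h.1
    obtain rfl : i = i' := Fin.ext h.2
    rfl
  · rintro ⟨⟨c, i⟩, hy⟩
    obtain ⟨hi, hc⟩ := (mem_youngShape_iff hanti).1 hy
    have hh := (lt_colHeight_iff hanti c i).2 ⟨hi, hc⟩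
    have hr : colHeight l t c - 1 < t := by have := colHeight_le (l := l) (t := t) c; omega
    exact ⟨⟨⟨_, hr⟩, ⟨c, (colHeight_eq_succ_iff hanti hl0 hr).1 (by omega)⟩,
      ⟨i, by simp only; omega⟩⟩, rfl⟩

noncomputable def shapeCellEquiv (hanti : Antitone l) (hl0 : ∀ r, t ≤ r → l r = 0) :
    (Σ r : Fin t, colBlock l r × Fin (r + 1)) ≃ {p // p ∈ YoungShape l t} :=
  Equiv.ofBijective _ (shapeCell_bijective hanti hl0)

noncomputable def colPatternEquiv (hanti : Antitone l) (hl0 : ∀ r, t ≤ r → l r = 0)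
    (hm : 0 < m) :
    Tableau l t m × Tableau l t m ≃ ((r : Fin t) → colBlock l r → PatternPair m (r + 1)) where
  toFun p r c := colPattern hm p.1 p.2 (r + 1) c
  invFun g :=
    let e := shapeCellEquiv hanti hl0
    (fun y => (g _ (e.symm y).2.1).1 (e.symm y).2.2, fun y => (g _ (e.symm y).2.1).2 (e.symm y).2.2)
  left_inv p := by
    refine Prod.ext (funext fun y => ?_) (funext fun y => ?_) <;>
    · change extTab l t m hm _ (shapeCellEquiv hanti hl0 ((shapeCellEquiv hanti hl0).symm y)) = _
      rw [extTab_coe, Equiv.apply_symm_apply]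
  right_inv g := by
    funext r c
    refine Prod.ext (funext fun i => ?_) (funext fun i => ?_) <;>
    · change extTab l t m hm _ (shapeCellEquiv hanti hl0 ⟨r, c, i⟩) = _
      rw [extTab_coe]
      dsimp only
      rw [Equiv.symm_apply_apply]

end Columns

section CountFunction

variable {l : ℕ → ℕ} {t m : ℕ} {hm : 0 < m}
  {κ : (t' : ℕ) → (Fin t' → Fin m) → (Fin t' → Fin m) → ℕ} {τ' σ' : Tableau l t m}

theorem hasCountFun_iff : HasCountFun l t m hm κ τ' σ' ↔ ∀ t' ∈ Icc 1 t, ∀ p : PatternPair m t',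
    κ t' p.1 p.2 = #{c ∈ range (l 0) | colHeight l t c = t' ∧ colPattern hm τ' σ' t' c = p} := by
  simp only [HasCountFun, Prod.forall, colPattern, Prod.ext_iff, funext_iff, forall_and]

theorem hasCountFun_iff_hasFiberCards (hanti : Antitone l) (hl0 : ∀ r, t ≤ r → l r = 0) :
    HasCountFun l t m hm κ τ' σ' ↔ ∀ r : Fin t,
      HasFiberCards (fun p => κ (r + 1) p.1 p.2) (colPatternEquiv hanti hl0 hm (τ', σ') r) := by
  rw [hasCountFun_iff, forall_mem_Icc_one_iff]
  refine forall_congr' fun r => forall_congr' fun p => ?_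
  change _ ↔ Fintype.card {c : colBlock l r // colPattern hm τ' σ' (r + 1) c = p} = _
  rw [Finset.card_subtype_filter (colBlock l r) (fun c => colPattern hm τ' σ' (r + 1) c = p),
    filter_colHeight_eq_succ hanti hl0 r.2, eq_comm]

theorem hasCountFun_swap (H : HasCountFun l t m hm κ τ' σ') :
    HasCountFun l t m hm (fun k v w => κ k w v) σ' τ' := by
  intro t' ht' v w
  simp only [H t' ht' w v, and_comm]

theorem sum_filter_eq_card_of_hasCountFun (H : HasCountFun l t m hm κ τ' σ') {t' : ℕ}
    (ht' : t' ∈ Icc 1 t) (P : PatternPair m t' → Prop) [DecidablePred P] :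
    ∑ p ∈ univ.filter P, κ t' p.1 p.2
      = #{c ∈ range (l 0) | colHeight l t c = t' ∧ P (colPattern hm τ' σ' t' c)} := by
  rw [sum_congr rfl fun p _ => hasCountFun_iff.1 H t' ht' p]
  simpa only [filter_filter, mem_filter, mem_univ, true_and] using
    sum_card_fiberwise_eq_card_filter {c ∈ range (l 0) | colHeight l t c = t'} (univ.filter P)
      (colPattern hm τ' σ' t')

theorem rowCount_eq_sum_fst_of_hasCountFun (hanti : Antitone l)
    (H : HasCountFun l t m hm κ τ' σ') {i : ℕ} (hi : i < t) (s : Fin m) :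
    rowCount hm τ' i s = ∑ t' ∈ Icc (i + 1) t, ∑ v : Fin t' → Fin m, ∑ w : Fin t' → Fin m,
      if h : i < t' then (if v ⟨i, h⟩ = s then κ t' v w else 0) else 0 := by
  rw [rowCount, card_filter_range_eq_sum_colHeight hanti hi]
  refine sum_congr rfl fun t' ht' => ?_
  have hit' : i < t' := by simp only [mem_Icc] at ht'; omega
  simp only [dif_pos hit']
  rw [← Fintype.sum_prod_type' (f := fun v w => if v ⟨i, hit'⟩ = s then κ t' v w else 0),
    ← sum_filter, sum_filter_eq_card_of_hasCountFun H (Icc_subset_Icc_left (by omega) ht')]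
  rfl

theorem rowCount_eq_sum_snd_of_hasCountFun (hanti : Antitone l)
    (H : HasCountFun l t m hm κ τ' σ') {i : ℕ} (hi : i < t) (s : Fin m) :
    rowCount hm σ' i s = ∑ t' ∈ Icc (i + 1) t, ∑ v : Fin t' → Fin m, ∑ w : Fin t' → Fin m,
      if h : i < t' then (if w ⟨i, h⟩ = s then κ t' v w else 0) else 0 := by
  rw [rowCount_eq_sum_fst_of_hasCountFun hanti (hasCountFun_swap H) hi s]
  exact sum_congr rfl fun _ _ => sum_comm

theorem sum_countFun_eq_of_marginal {τ : Tableau l t m}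
    (hκτ : ∀ i : ℕ, i < t → ∀ s : Fin m,
      (∑ t' ∈ Icc (i + 1) t, ∑ v : Fin t' → Fin m, ∑ w : Fin t' → Fin m,
        if h : i < t' then (if v ⟨i, h⟩ = s then κ t' v w else 0) else 0)
      = rowCount hm τ i s) {i : ℕ} (hi : i < t) :
    ∑ t' ∈ Icc (i + 1) t, ∑ v : Fin t' → Fin m, ∑ w : Fin t' → Fin m, κ t' v w = l i := by
  rw [← sum_rowCount hm τ i, ← sum_congr (s₁ := univ) rfl fun s _ => hκτ i hi s, sum_comm]
  refine sum_congr rfl fun t' ht' => ?_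
  have hit' : i < t' := by simp only [mem_Icc] at ht'; omega
  simp only [dif_pos hit']
  symm
  rw [sum_comm]
  refine sum_congr rfl fun v _ => ?_
  rw [sum_comm]
  simp

end CountFunction

theorem card_hasCountFun_mul_prod_factorial {l : ℕ → ℕ} {t m : ℕ} (hanti : Antitone l)
    (hl0 : ∀ r, t ≤ r → l r = 0) (hm : 0 < m)
    (κ : (t' : ℕ) → (Fin t' → Fin m) → (Fin t' → Fin m) → ℕ)
    (hmass : ∀ r : Fin t,
      ∑ v : Fin (r + 1) → Fin m, ∑ w : Fin (r + 1) → Fin m, κ (r + 1) v w = l r - l (r + 1)) :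
    #{p : Tableau l t m × Tableau l t m | HasCountFun l t m hm κ p.1 p.2}
      * ∏ t' ∈ Icc 1 t, ∏ v : Fin t' → Fin m, ∏ w : Fin t' → Fin m, (κ t' v w).factorial
      = ∏ r ∈ range t, (l r - l (r + 1)).factorial := by
  have hblock (r : Fin t) :
      Fintype.card {g : colBlock l r → PatternPair m (r + 1) //
          HasFiberCards (fun p => κ (r + 1) p.1 p.2) g}
        * ∏ p : PatternPair m (r + 1), (κ (r + 1) p.1 p.2).factorial
        = (l r - l (r + 1)).factorial := by
    have hcard : Fintype.card (colBlock l r) = l r - l (r + 1) := by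
      rw [colBlock, Fintype.card_coe, Nat.card_Ico]
    rw [← hcard]
    exact card_hasFiberCards_mul_prod_factorial (by rw [Fintype.sum_prod_type, hmass, hcard])
  rw [← Fintype.card_subtype, Fintype.card_congr ((colPatternEquiv hanti hl0 hm).subtypeEquiv
      (q := fun g => ∀ r : Fin t, HasFiberCards (fun p => κ (r + 1) p.1 p.2) (g r))
      fun _ => hasCountFun_iff_hasFiberCards hanti hl0),
    Fintype.card_congr Equiv.subtypePiEquivPi, Fintype.card_pi, prod_Icc_one_eq_prod_fin,
    ← prod_mul_distrib, ← Fin.prod_univ_eq_prod_range (fun r => (l r - l (r + 1)).factorial)]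
  exact prod_congr rfl fun r _ => by rw [← Fintype.prod_prod_type']; exact hblock r

theorem card_pairs_with_count_function_general
    (t m : ℕ) (hm : 0 < m) (l : ℕ → ℕ)
    (hl0 : ∀ r, t ≤ r → l r = 0)
    (hanti : Antitone l)
    (τ σ : {p // p ∈ YoungShape l t} → Fin m)
    (κ : (t' : ℕ) → (Fin t' → Fin m) → (Fin t' → Fin m) → ℕ)
    (hκτ : ∀ i : ℕ, i < t → ∀ s : Fin m,
      (∑ t' ∈ Icc (i + 1) t, ∑ v : Fin t' → Fin m, ∑ w : Fin t' → Fin m,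
        if h : i < t' then (if v ⟨i, h⟩ = s then κ t' v w else 0) else 0)
      = ((range (l i)).filter (fun c => extTab l t m hm τ (c, i) = s)).card)
    (hκσ : ∀ i : ℕ, i < t → ∀ s : Fin m,
      (∑ t' ∈ Icc (i + 1) t, ∑ v : Fin t' → Fin m, ∑ w : Fin t' → Fin m,
        if h : i < t' then (if w ⟨i, h⟩ = s then κ t' v w else 0) else 0)
      = ((range (l i)).filter (fun c => extTab l t m hm σ (c, i) = s)).card) :
    (((rowClass l t m τ) ×ˢ (rowClass l t m σ)).filter
        (fun p => HasCountFun l t m hm κ p.1 p.2)).card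
      = (∏ r ∈ range t, (l r - l (r + 1)).factorial)
        / (∏ t' ∈ Icc 1 t, ∏ v : Fin t' → Fin m, ∏ w : Fin t' → Fin m,
            (κ t' v w).factorial) := by
  have hmass (r : Fin t) :
      ∑ v : Fin (r + 1) → Fin m, ∑ w : Fin (r + 1) → Fin m, κ (r + 1) v w = l r - l (r + 1) :=
    eq_sub_of_sum_Icc_eq (fun _ hi => sum_countFun_eq_of_marginal hκτ hi) (hl0 t le_rfl) r.2
  have hrowClass : ((rowClass l t m τ) ×ˢ (rowClass l t m σ)).filter
        (fun p => HasCountFun l t m hm κ p.1 p.2)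
      = univ.filter (fun p => HasCountFun l t m hm κ p.1 p.2) := by
    ext ⟨τ', σ'⟩
    simp only [mem_filter, mem_product, mem_univ, true_and, and_iff_right_iff_imp]
    refine fun H => ⟨mem_rowClass_of_rowCount_eq hanti hl0 hm fun i hi s => ?_,
      mem_rowClass_of_rowCount_eq hanti hl0 hm fun i hi s => ?_⟩
    · exact (rowCount_eq_sum_fst_of_hasCountFun hanti H hi s).trans (hκτ i hi s)
    · exact (rowCount_eq_sum_snd_of_hasCountFun hanti H hi s).trans (hκσ i hi s)
  rw [hrowClass, ← card_hasCountFun_mul_prod_factorial hanti hl0 hm κ hmass,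
    Nat.mul_div_cancel _ (by positivity)]

/-- fix a partition `λ ⊢ n` of height `t` (row lengths
`l 0 ≥ l 1 ≥ ⋯`, so `λ_i = l (i-1)` and `λ_{t+1} = l t = 0`) and tableaux
`τ, σ` with entries in `[m]`.  If a count function
`κ : ⋃_{t'=1}^t ([m]^{t'} × [m]^{t'}) → ℕ` satisfies, for each row `i < t` and
each `s ∈ [m]`, `∑_{t'=i+1}^{t} ∑_{v,w ∈ [m]^{t'}, v_i = s} κ t' v w = ` (number
of entries equal to `s` in row `i` of `τ`) and the analogous condition for `σ`,
then the number of pairs `(τ', σ')` with `τ' ∼ τ`, `σ' ∼ σ` whose column-pattern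
count function equals `κ` is `∏_{r<t} (λ_r − λ_{r+1})! / ∏_{t',v,w} κ(v,w)!`. -/
theorem card_pairs_with_count_function
    (n t m : ℕ) (hm : 0 < m) (l : ℕ → ℕ)
    (hl0 : ∀ r, t ≤ r → l r = 0)
    (hlpos : ∀ r, r < t → 0 < l r)
    (hanti : Antitone l)
    (hsum : ∑ r ∈ range t, l r = n)
    (τ σ : {p // p ∈ YoungShape l t} → Fin m)
    (κ : (t' : ℕ) → (Fin t' → Fin m) → (Fin t' → Fin m) → ℕ)
    (hκτ : ∀ i : ℕ, i < t → ∀ s : Fin m,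
      (∑ t' ∈ Icc (i + 1) t, ∑ v : Fin t' → Fin m, ∑ w : Fin t' → Fin m,
        if h : i < t' then (if v ⟨i, h⟩ = s then κ t' v w else 0) else 0)
      = ((range (l i)).filter (fun c => extTab l t m hm τ (c, i) = s)).card)
    (hκσ : ∀ i : ℕ, i < t → ∀ s : Fin m,
      (∑ t' ∈ Icc (i + 1) t, ∑ v : Fin t' → Fin m, ∑ w : Fin t' → Fin m,
        if h : i < t' then (if w ⟨i, h⟩ = s then κ t' v w else 0) else 0)
      = ((range (l i)).filter (fun c => extTab l t m hm σ (c, i) = s)).card) :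
    (((rowClass l t m τ) ×ˢ (rowClass l t m σ)).filter
        (fun p => HasCountFun l t m hm κ p.1 p.2)).card
      = (∏ r ∈ range t, (l r - l (r + 1)).factorial)
        / (∏ t' ∈ Icc 1 t, ∏ v : Fin t' → Fin m, ∏ w : Fin t' → Fin m,
            (κ t' v w).factorial) :=
  card_pairs_with_count_function_general t m hm l hl0 hanti τ σ κ hκτ hκσ
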